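/- An atomic lattice effect algebra E is a complete lattice if and only if E is Archimedean and sharply orthocomplete. -/

import Mathlib

universe u v

/-- An effect algebra: a partial algebra `(E; ⊕, 0, 1)` with `0 ≠ 1`, where `⊕` is
partially defined (domain `D`), commutative and associative where defined, every
element has a unique orthosupplement (`compl`, skolemizing axiom (Eiii)), and
`1 ⊕ x` defined implies `x = 0`. -/
structure EffectAlgebra (E : Type u) where
  D : E → E → Prop
  oplus : E → E → E
  zero : E
  one : E
  zero_ne_one : zero ≠ one
  D_comm : ∀ x y, D x y → D y x
  oplus_comm : ∀ x y, D x y → oplus x y = oplus y x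
  assoc : ∀ x y z, D x y → D (oplus x y) z →
      D y z ∧ D x (oplus y z) ∧ oplus (oplus x y) z = oplus x (oplus y z)
  assoc' : ∀ x y z, D y z → D x (oplus y z) →
      D x y ∧ D (oplus x y) z ∧ oplus (oplus x y) z = oplus x (oplus y z)
  compl : E → E
  D_compl : ∀ x, D x (compl x)
  oplus_compl : ∀ x, oplus x (compl x) = one
  compl_unique : ∀ x y, D x y → oplus x y = one → y = compl x
  one_max : ∀ x, D one x → x = zero

namespace EffectAlgebra

variable {E : Type u} (A : EffectAlgebra E)

/-- The induced order: `x ≤ y` iff `x ⊕ z = y` for some `z`. -/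
def le (x y : E) : Prop := ∃ z, A.D x z ∧ A.oplus x z = y

def IsLB (S : Set E) (m : E) : Prop := ∀ x ∈ S, A.le m x
def IsUB (S : Set E) (m : E) : Prop := ∀ x ∈ S, A.le x m

/-- `m` is the infimum of `S` computed within the subposet `P`. -/
def IsInfIn (P : Set E) (S : Set E) (m : E) : Prop :=
  m ∈ P ∧ A.IsLB S m ∧ ∀ z ∈ P, A.IsLB S z → A.le z m

/-- `m` is the supremum of `S` computed within the subposet `P`. -/
def IsSupIn (P : Set E) (S : Set E) (m : E) : Prop :=
  m ∈ P ∧ A.IsUB S m ∧ ∀ z ∈ P, A.IsUB S z → A.le m z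

/-- `w` is sharp iff the meet `w ∧ w'` exists in `E` and equals `0`. -/
def Sharp (w : E) : Prop := A.IsInfIn Set.univ {w, A.compl w} A.zero

/-- The set `S(E)` of sharp elements. -/
def sharpSet : Set E := {w | A.Sharp w}

def HasMeet (x y : E) : Prop := ∃ m, A.IsInfIn Set.univ {x, y} m
def HasJoin (x y : E) : Prop := ∃ j, A.IsSupIn Set.univ {x, y} j

/-- Every `x` has a least sharp element above it, which is the infimum of the sharp
elements above `x` both in `E` and in `S(E)`. -/
def SharplyDominating : Prop :=
  ∀ x : E, ∃ w, A.Sharp w ∧ A.le x w ∧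
    A.IsInfIn Set.univ {v | A.Sharp v ∧ A.le x v} w ∧
    A.IsInfIn A.sharpSet {v | A.Sharp v ∧ A.le x v} w

/-- Sharply dominating, and `x ∧ w` exists for every `x ∈ E`, `w ∈ S(E)`. -/
def SDominating : Prop :=
  A.SharplyDominating ∧ ∀ x w : E, A.Sharp w → A.HasMeet x w

end EffectAlgebra

/-- `SumDef A l s` : the orthosum of the finite list `l` is defined and equals `s`. -/
inductive EffectAlgebra.SumDef {E : Type u} (A : EffectAlgebra E) : List E → E → Prop
  | nil : EffectAlgebra.SumDef A [] A.zero
  | cons {x : E} {l : List E} {s : E} : EffectAlgebra.SumDef A l s → A.D x s →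
      EffectAlgebra.SumDef A (x :: l) (A.oplus x s)

namespace EffectAlgebra

variable {E : Type u} (A : EffectAlgebra E)

/-- A family is orthogonal iff every finite subfamily has a defined orthosum. -/
def Orthogonal {ι : Type v} (x : ι → E) : Prop :=
  ∀ l : List ι, l.Nodup → ∃ s, A.SumDef (l.map x) s

/-- The set of finite partial orthosums of a family. -/
def finiteSums {ι : Type v} (x : ι → E) : Set E :=
  {s | ∃ l : List ι, l.Nodup ∧ A.SumDef (l.map x) s}

/-- `v = ⊕ x` : the family is orthogonal and `v` is the supremum in `E` of all
finite partial orthosums. -/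
def HasOrthoSum {ι : Type v} (x : ι → E) (v : E) : Prop :=
  A.Orthogonal x ∧ A.IsSupIn Set.univ (A.finiteSums x) v

/-- Every family dominated elementwise by an orthogonal family of sharp
elements has an orthosum. -/
def SharplyOrthocomplete : Prop :=
  ∀ (ι : Type u) (x w : ι → E), (∀ k, A.Sharp (w k)) → A.Orthogonal w →
    (∀ k, A.le (x k) (w k)) → ∃ v, A.HasOrthoSum x v

/-- `c` is central: for every `y` the meets `y ∧ c`, `y ∧ c'` exist and
`y = (y ∧ c) ∨ (y ∧ c')`. -/
def Central (c : E) : Prop :=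
  ∀ y : E, ∃ m₁ m₂, A.IsInfIn Set.univ {y, c} m₁ ∧
    A.IsInfIn Set.univ {y, A.compl c} m₂ ∧ A.IsSupIn Set.univ {m₁, m₂} y

/-- The center `C(E)`. -/
def centerSet : Set E := {c | A.Central c}

def CentrallyDominating : Prop :=
  ∀ x : E, ∃ c, A.Central c ∧ A.le x c ∧
    A.IsInfIn Set.univ {d | A.Central d ∧ A.le x d} c ∧
    A.IsInfIn A.centerSet {d | A.Central d ∧ A.le x d} c

def CentrallyOrthocomplete : Prop :=
  ∀ (ι : Type u) (x c : ι → E), (∀ k, A.Central (c k)) → A.Orthogonal c →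
    (∀ k, A.le (x k) (c k)) → ∃ v, A.HasOrthoSum x v

/-- `P` is bifull in `E`: for `S ⊆ P`, the join of `S` in `P` exists iff the join
of `S` in `E` exists, and then they coincide. -/
def Bifull (P : Set E) : Prop :=
  ∀ S ⊆ P, (∀ s, A.IsSupIn P S s → A.IsSupIn Set.univ S s) ∧
    (∀ s, A.IsSupIn Set.univ S s → A.IsSupIn P S s)

/-- The subposet `P` is a complete lattice: every subset of `P` has a supremum
(and an infimum) computed within `P`. -/
def CompleteIn (P : Set E) : Prop :=
  ∀ S ⊆ P, (∃ s, A.IsSupIn P S s) ∧ (∃ m, A.IsInfIn P S m)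

/-- `E` is a complete lattice. -/
def Complete : Prop :=
  ∀ S : Set E, (∃ s, A.IsSupIn Set.univ S s) ∧ (∃ m, A.IsInfIn Set.univ S m)

/-- The induced order of `E` is a lattice. -/
def LatticeOrdered : Prop := ∀ x y : E, A.HasMeet x y ∧ A.HasJoin x y

/-- `x ↔ y` : `x ∨ y = x ⊕ (y ⊖ (x ∧ y))`. -/
def Compatible (x y : E) : Prop :=
  ∃ m j z, A.IsInfIn Set.univ {x, y} m ∧ A.IsSupIn Set.univ {x, y} j ∧
    A.D m z ∧ A.oplus m z = y ∧ A.D x z ∧ A.oplus x z = j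

/-- An MV-effect algebra: a lattice effect algebra all of whose pairs of elements
are compatible. -/
def MV : Prop := A.LatticeOrdered ∧ ∀ x y : E, A.Compatible x y

/-- `nx = x ⊕ ⋯ ⊕ x` (`n` times) is defined. -/
def nTimesDef (n : ℕ) (x : E) : Prop := ∃ s, A.SumDef (List.replicate n x) s

/-- `ord x < ∞` for every nonzero `x`. -/
def IsArchimedean : Prop := ∀ x : E, x ≠ A.zero → ∃ n : ℕ, ¬ A.nTimesDef n x

def Atom (a : E) : Prop := a ≠ A.zero ∧ ∀ b, A.le b a → b = A.zero ∨ b = a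

def Atomic : Prop := ∀ x : E, x ≠ A.zero → ∃ a, A.Atom a ∧ A.le a x

/-- The subposet `P` (closed under `'`) is an orthomodular lattice. -/
def OrthomodularIn (P : Set E) : Prop :=
  (∀ x ∈ P, ∀ y ∈ P, (∃ m, A.IsInfIn P {x, y} m) ∧ (∃ j, A.IsSupIn P {x, y} j)) ∧
  A.zero ∈ P ∧ A.one ∈ P ∧ (∀ x ∈ P, A.compl x ∈ P) ∧
  (∀ x ∈ P, A.IsInfIn P {x, A.compl x} A.zero ∧ A.IsSupIn P {x, A.compl x} A.one) ∧
  (∀ x ∈ P, ∀ y ∈ P, A.le x y →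
    ∃ m, A.IsInfIn P {y, A.compl x} m ∧ A.IsSupIn P {x, m} y)

def DistributiveIn (P : Set E) : Prop :=
  ∀ x ∈ P, ∀ y ∈ P, ∀ z ∈ P, ∀ jyz mxy mxz m : E,
    A.IsSupIn P {y, z} jyz → A.IsInfIn P {x, y} mxy → A.IsInfIn P {x, z} mxz →
    A.IsInfIn P {x, jyz} m → A.IsSupIn P {mxy, mxz} m

/-- The subposet `P` is a Boolean algebra (complemented distributive lattice with
bounds, complement given by `'`). -/
def BooleanIn (P : Set E) : Prop :=
  (∀ x ∈ P, ∀ y ∈ P, (∃ m, A.IsInfIn P {x, y} m) ∧ (∃ j, A.IsSupIn P {x, y} j)) ∧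
  A.zero ∈ P ∧ A.one ∈ P ∧ (∀ x ∈ P, A.compl x ∈ P) ∧
  (∀ x ∈ P, A.IsInfIn P {x, A.compl x} A.zero ∧ A.IsSupIn P {x, A.compl x} A.one) ∧
  A.DistributiveIn P

/-- A block: a maximal set of pairwise compatible elements. -/
def Block (M : Set E) : Prop :=
  (∀ x ∈ M, ∀ y ∈ M, A.Compatible x y) ∧
  ∀ N : Set E, M ⊆ N → (∀ x ∈ N, ∀ y ∈ N, A.Compatible x y) → N = M

def AtomIn (M : Set E) (a : E) : Prop :=
  a ∈ M ∧ a ≠ A.zero ∧ ∀ b ∈ M, A.le b a → b = A.zero ∨ b = a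

def AtomicIn (M : Set E) : Prop :=
  ∀ x ∈ M, x ≠ A.zero → ∃ a, A.AtomIn M a ∧ A.le a x

end EffectAlgebra


/-! A complete lattice effect algebra is Archimedean, because for `s = sup {n • x}` one gets
`x ⊕ s ≤ s`, and it has the suprema of finite partial sums required by sharp orthocompleteness.

Conversely, for `T ⊆ E` choose by Zorn's lemma maximal multiplicities `k a` of atoms such that
all finite orthosums `⊕ k a • a` over distinct atoms exist and lie below every upper bound of
`T`. In a lattice effect algebra `n • a` meets trivially every element orthogonal to it that is
not above the atom `a`; hence `ord a • a` is sharp, and an atom orthogonal to `y` but not below it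
has all its defined multiples orthogonal to `y`. The latter lets us raise each `k a` to `ord a`
(finite by the Archimedean property), so the `ord a • a` form an orthogonal family of sharp
elements dominating the `k a • a`, and sharp orthocompleteness yields `v = ⊕ k a • a`. If some
`t ∈ T` were not below `v`, an atom below `(t ∨ v) ⊖ v` could be added to `k`, against
maximality; so `v = sup T`, and infima are obtained through `x ↦ x'`. -/

namespace EffectAlgebra

variable {E : Type u} {A : EffectAlgebra E}

section Arithmetic

lemma compl_D (x : E) : A.D (A.compl x) x := A.D_comm _ _ (A.D_compl x)

lemma compl_oplus (x : E) : A.oplus (A.compl x) x = A.one := by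
  rw [← A.oplus_comm x _ (A.D_compl x), A.oplus_compl]

lemma compl_compl (x : E) : A.compl (A.compl x) = x :=
  (A.compl_unique _ x (compl_D x) (compl_oplus x)).symm

lemma compl_injective : Function.Injective A.compl := fun x y h => by
  rw [← compl_compl x, h, compl_compl]

lemma compl_one : A.compl A.one = A.zero := A.one_max _ (A.D_compl A.one)

lemma D_zero_one : A.D A.zero A.one := by
  simpa [compl_one] using compl_D (A := A) A.one

lemma zero_oplus_one : A.oplus A.zero A.one = A.one := by
  simpa [compl_one] using compl_oplus (A := A) A.one

lemma D_zero_left (x : E) : A.D A.zero x :=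
  (A.assoc' _ _ _ (A.D_compl x) (by rw [A.oplus_compl]; exact D_zero_one)).1

lemma D_zero_right (x : E) : A.D x A.zero := A.D_comm _ _ (D_zero_left x)

lemma zero_oplus (x : E) : A.oplus A.zero x = x := by
  obtain ⟨-, hd, he⟩ :=
    A.assoc' A.zero x _ (A.D_compl x) (by rw [A.oplus_compl]; exact D_zero_one)
  rw [A.oplus_compl, zero_oplus_one] at he
  exact compl_injective (A.compl_unique _ _ hd he).symm

lemma oplus_zero (x : E) : A.oplus x A.zero = x := by
  rw [← A.oplus_comm _ _ (D_zero_left x), zero_oplus]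

lemma cancel_left {x a b : E} (ha : A.D x a) (hb : A.D x b)
    (e : A.oplus x a = A.oplus x b) : a = b := by
  have key : ∀ c, A.D x c → A.compl c = A.oplus x (A.compl (A.oplus x c)) := fun c hc => by
    obtain ⟨-, hd, he⟩ := A.assoc _ _ _ (A.D_comm _ _ hc) (by
      rw [A.oplus_comm _ _ (A.D_comm _ _ hc)]; exact A.D_compl _)
    rw [A.oplus_comm c x (A.D_comm _ _ hc), A.oplus_compl] at he
    exact (A.compl_unique _ _ hd he.symm).symm
  exact compl_injective (by rw [key a ha, key b hb, e])

end Arithmetic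

section Order

lemma le_refl (x : E) : A.le x x := ⟨A.zero, D_zero_right x, oplus_zero x⟩

lemma zero_le (x : E) : A.le A.zero x := ⟨x, D_zero_left x, zero_oplus x⟩

lemma le_oplus_left {x y : E} (h : A.D x y) : A.le x (A.oplus x y) := ⟨y, h, rfl⟩

lemma le_oplus_right {x y : E} (h : A.D x y) : A.le y (A.oplus x y) :=
  ⟨x, A.D_comm _ _ h, (A.oplus_comm x y h).symm⟩

lemma le_trans {x y z : E} (h1 : A.le x y) (h2 : A.le y z) : A.le x z := by
  obtain ⟨a, ha, rfl⟩ := h1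
  obtain ⟨b, hb, rfl⟩ := h2
  obtain ⟨-, hd, he⟩ := A.assoc x a b ha hb
  exact ⟨A.oplus a b, hd, he.symm⟩

lemma eq_zero_of_le_zero {x : E} (h : A.le x A.zero) : x = A.zero := by
  obtain ⟨z, hz, e⟩ := h
  obtain ⟨hz1, -, -⟩ := A.assoc x z A.one hz (by rw [e]; exact D_zero_one)
  rwa [A.one_max z (A.D_comm _ _ hz1), oplus_zero] at e

lemma oplus_compl_oplus {x y : E} (h : A.D x y) :
    A.D y (A.compl (A.oplus x y)) ∧ A.oplus y (A.compl (A.oplus x y)) = A.compl x := by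
  obtain ⟨hd₁, hd₂, he⟩ := A.assoc x y _ h (A.D_compl _)
  rw [A.oplus_compl] at he
  exact ⟨hd₁, A.compl_unique _ _ hd₂ he.symm⟩

lemma le_compl_of_D {x y : E} (h : A.D x y) : A.le y (A.compl x) :=
  ⟨_, (oplus_compl_oplus h).1, (oplus_compl_oplus h).2⟩

lemma D_of_le_compl {x y : E} (h : A.le x (A.compl y)) : A.D x y := by
  obtain ⟨z, hz, e⟩ := h
  obtain ⟨h1, h2, -⟩ := A.assoc x z y hz (by rw [e]; exact compl_D y)
  rw [A.oplus_comm z y h1] at h2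
  exact (A.assoc' x y z (A.D_comm _ _ h1) h2).1

lemma compl_antitone {x y : E} (h : A.le x y) : A.le (A.compl y) (A.compl x) := by
  obtain ⟨z, hz, rfl⟩ := h
  obtain ⟨hd, he⟩ := oplus_compl_oplus hz
  exact ⟨z, A.D_comm _ _ hd, by rw [← A.oplus_comm _ _ hd, he]⟩

lemma D_mono {x y a b : E} (h : A.D x y) (hax : A.le a x) (hby : A.le b y) : A.D a b :=
  D_of_le_compl (le_trans hax (le_trans (le_compl_of_D (A.D_comm _ _ h)) (compl_antitone hby)))

lemma oplus_le_oplus_right {x a b : E} (h : A.le a b) (hd : A.D x b) :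
    A.le (A.oplus x a) (A.oplus x b) := by
  obtain ⟨c, hc, rfl⟩ := h
  obtain ⟨-, hd', he⟩ := A.assoc' x a c hc hd
  exact ⟨c, hd', he⟩

lemma oplus_le_oplus {a b x y : E} (hax : A.le a x) (hby : A.le b y) (hd : A.D x y) :
    A.le (A.oplus a b) (A.oplus x y) := by
  have hay : A.D a y := D_mono hd hax (le_refl y)
  refine le_trans (oplus_le_oplus_right hby hay) ?_
  rw [A.oplus_comm a y hay, A.oplus_comm x y hd]
  exact oplus_le_oplus_right hax (A.D_comm _ _ hd)

lemma cancel_le_left {x a b : E} (hda : A.D x a) (hdb : A.D x b)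
    (h : A.le (A.oplus x a) (A.oplus x b)) : A.le a b := by
  obtain ⟨c, hc, e⟩ := h
  obtain ⟨h1, h2, h3⟩ := A.assoc x a c hda hc
  exact ⟨c, h1, cancel_left h2 hdb (h3 ▸ e)⟩

lemma cancel_le_right {x a b : E} (hda : A.D a x) (hdb : A.D b x)
    (h : A.le (A.oplus a x) (A.oplus b x)) : A.le a b :=
  cancel_le_left (A.D_comm _ _ hda) (A.D_comm _ _ hdb)
    (by rwa [A.oplus_comm _ _ hda, A.oplus_comm _ _ hdb] at h)

lemma eq_zero_of_oplus_le {x s : E} (hd : A.D x s) (h : A.le (A.oplus x s) s) :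
    x = A.zero := by
  obtain ⟨e, he, hes⟩ := h
  rw [A.oplus_comm x s hd] at he hes
  obtain ⟨hxe, hd', hes'⟩ := A.assoc s x e (A.D_comm _ _ hd) he
  have hxe0 : A.oplus x e = A.zero :=
    cancel_left hd' (D_zero_right s) (by rw [← hes', hes, oplus_zero])
  exact eq_zero_of_le_zero (hxe0 ▸ le_oplus_left hxe)

end Order

section FiniteSums

lemma sumDef_nil_iff {s : E} : A.SumDef [] s ↔ s = A.zero :=
  ⟨fun h => by cases h; rfl, fun h => h ▸ SumDef.nil⟩

lemma sumDef_cons_iff {x s : E} {l : List E} :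
    A.SumDef (x :: l) s ↔ ∃ t, A.SumDef l t ∧ A.D x t ∧ s = A.oplus x t :=
  ⟨fun h => by cases h with | cons ht hd => exact ⟨_, ht, hd, rfl⟩,
    fun ⟨_, ht, hd, hs⟩ => hs ▸ SumDef.cons ht hd⟩

lemma sumDef_unique {l : List E} {s t : E} (hs : A.SumDef l s) (ht : A.SumDef l t) :
    s = t := by
  induction hs generalizing t with
  | nil => exact (sumDef_nil_iff.1 ht).symm
  | cons _ _ ih =>
    obtain ⟨t', ht', -, rfl⟩ := sumDef_cons_iff.1 ht
    rw [ih ht']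

lemma sumDef_perm {l₁ l₂ : List E} (hp : l₁.Perm l₂) {s : E} (hs : A.SumDef l₁ s) :
    A.SumDef l₂ s := by
  induction hp generalizing s with
  | nil => exact hs
  | cons x _ ih =>
    obtain ⟨t, ht, hd, rfl⟩ := sumDef_cons_iff.1 hs
    exact SumDef.cons (ih ht) hd
  | swap x y l =>
    obtain ⟨_, hs₁, hdy, rfl⟩ := sumDef_cons_iff.1 hs
    obtain ⟨t, ht, hdx, rfl⟩ := sumDef_cons_iff.1 hs₁
    obtain ⟨hyx, hyxt, e₁⟩ := A.assoc' y x t hdx hdy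
    have hxy : A.D (A.oplus x y) t := by rwa [A.oplus_comm x y (A.D_comm _ _ hyx)]
    obtain ⟨hyt, hxyt, e₂⟩ := A.assoc x y t (A.D_comm _ _ hyx) hxy
    rw [← e₁, A.oplus_comm y x hyx, e₂]
    exact SumDef.cons (SumDef.cons ht hyt) hxyt
  | trans _ _ ih₁ ih₂ => exact ih₂ (ih₁ hs)

lemma sumDef_of_forall₂_le {l₁ l₂ : List E} (hf : List.Forall₂ A.le l₁ l₂) {s : E}
    (hs : A.SumDef l₂ s) : ∃ t, A.SumDef l₁ t ∧ A.le t s := by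
  induction hf generalizing s with
  | nil => exact ⟨_, SumDef.nil, zero_le _⟩
  | cons hab _ ih =>
    obtain ⟨s', hs', hd, rfl⟩ := sumDef_cons_iff.1 hs
    obtain ⟨t, ht, hts⟩ := ih hs'
    exact ⟨_, SumDef.cons ht (D_mono hd hab hts), oplus_le_oplus hab hts hd⟩

lemma sumDef_map_iff_of_mem {ι : Type v} [DecidableEq ι] {l : List ι} {i : ι} (hi : i ∈ l)
    (f : ι → E) {s : E} :
    A.SumDef (l.map f) s ↔
      ∃ t, A.SumDef ((l.erase i).map f) t ∧ A.D (f i) t ∧ s = A.oplus (f i) t := by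
  rw [← sumDef_cons_iff]
  have hp := (List.perm_cons_erase hi).map f
  exact ⟨sumDef_perm hp, sumDef_perm hp.symm⟩

end FiniteSums

section Multiples

variable (A) in
/-- `n • a`, computed with the total `oplus`: it is the orthosum of `n` copies of `a` only when
`A.nTimesDef n a`. -/
def nsmul : ℕ → E → E
  | 0, _ => A.zero
  | n + 1, a => A.oplus a (nsmul n a)

lemma eq_nsmul_of_sumDef {n : ℕ} {a s : E} (h : A.SumDef (List.replicate n a) s) :
    s = A.nsmul n a := by
  induction n generalizing s with
  | zero => exact sumDef_nil_iff.1 h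
  | succ n ih =>
    obtain ⟨t, ht, -, rfl⟩ := sumDef_cons_iff.1 h
    rw [ih ht, nsmul]

lemma nTimesDef_zero (a : E) : A.nTimesDef 0 a := ⟨_, SumDef.nil⟩

lemma nTimesDef_succ_iff {n : ℕ} {a : E} :
    A.nTimesDef (n + 1) a ↔ A.nTimesDef n a ∧ A.D a (A.nsmul n a) := by
  constructor
  · rintro ⟨s, hs⟩
    obtain ⟨t, ht, hd, -⟩ := sumDef_cons_iff.1 hs
    exact ⟨⟨t, ht⟩, eq_nsmul_of_sumDef ht ▸ hd⟩
  · rintro ⟨⟨t, ht⟩, hd⟩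
    exact ⟨_, SumDef.cons ht (eq_nsmul_of_sumDef ht ▸ hd)⟩

lemma nTimesDef.mono {m n : ℕ} {a : E} (hmn : m ≤ n) (h : A.nTimesDef n a) :
    A.nTimesDef m a := by
  induction n with
  | zero => rwa [Nat.le_zero.1 hmn]
  | succ n ih =>
    rcases Nat.of_le_succ hmn with hmn | rfl
    · exact ih hmn (nTimesDef_succ_iff.1 h).1
    · exact h

lemma nsmul_le_nsmul {m n : ℕ} {a : E} (hmn : m ≤ n) (h : A.nTimesDef n a) :
    A.le (A.nsmul m a) (A.nsmul n a) := by
  induction n with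
  | zero => rw [Nat.le_zero.1 hmn]; exact le_refl _
  | succ n ih =>
    rcases Nat.of_le_succ hmn with hmn | rfl
    · obtain ⟨hn, hd⟩ := nTimesDef_succ_iff.1 h
      exact le_trans (ih hmn hn) (le_oplus_right hd)
    · exact le_refl _

lemma le_nsmul {n : ℕ} {a : E} (hn : n ≠ 0) (h : A.nTimesDef n a) :
    A.le a (A.nsmul n a) := by
  obtain ⟨n, rfl⟩ := Nat.exists_eq_succ_of_ne_zero hn
  exact le_oplus_left (nTimesDef_succ_iff.1 h).2

variable (A) in
/-- `sSup` of an unbounded set of naturals is `0`, so this is the order of `a` only when some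
multiple of `a` is undefined. -/
noncomputable def ord (a : E) : ℕ := sSup {n | A.nTimesDef n a}

section Ord

variable {a : E} (ha : ∃ n, ¬ A.nTimesDef n a)
include ha

lemma bddAbove_nTimesDef : BddAbove {n | A.nTimesDef n a} := by
  obtain ⟨n, hn⟩ := ha
  exact ⟨n, fun k hk => by_contra fun hkn => hn (hk.mono (by omega))⟩

lemma le_ord {k : ℕ} (hk : A.nTimesDef k a) : k ≤ A.ord a :=
  le_csSup (bddAbove_nTimesDef ha) hk

lemma nTimesDef_ord : A.nTimesDef (A.ord a) a :=
  Nat.sSup_mem ⟨0, nTimesDef_zero a⟩ (bddAbove_nTimesDef ha)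

lemma not_nTimesDef_ord_succ : ¬ A.nTimesDef (A.ord a + 1) a :=
  fun h => by have := le_ord ha h; omega

end Ord

end Multiples

section Disjoint

variable (A) in
def Disjoint (x y : E) : Prop := ∀ z, A.le z x → A.le z y → z = A.zero

lemma Disjoint.symm {x y : E} (h : A.Disjoint x y) : A.Disjoint y x :=
  fun z hy hx => h z hx hy

lemma disjoint_zero_left (x : E) : A.Disjoint A.zero x :=
  fun _ hz _ => eq_zero_of_le_zero hz

lemma Atom.disjoint_of_not_le {a x : E} (ha : A.Atom a) (hax : ¬ A.le a x) :
    A.Disjoint a x := fun z hza hzx =>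
  (ha.2 z hza).resolve_right fun h => hax (h ▸ hzx)

lemma sharp_of_disjoint_compl {w : E} (h : A.Disjoint w (A.compl w)) : A.Sharp w := by
  refine ⟨trivial, ?_, fun z _ hz => ?_⟩
  · rintro x (rfl | rfl) <;> exact zero_le _
  · rw [h z (hz _ (Set.mem_insert _ _)) (hz _ (Set.mem_insert_of_mem _ rfl))]
    exact le_refl _

end Disjoint

section AtomMultiplicity

variable (A) in
def multiples (k : E → ℕ) (a : E) : E := A.nsmul (k a) a

variable (A) in
def IsAtomMultiplicity (k : E → ℕ) : Prop := ∀ a, k a ≠ 0 → A.Atom a ∧ A.nTimesDef (k a) a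

lemma map_erase_multiples_update [DecidableEq E] {l : List E} (hl : l.Nodup) (k : E → ℕ)
    (a : E) (n : ℕ) :
    (l.erase a).map (A.multiples (Function.update k a n)) = (l.erase a).map (A.multiples k) :=
  List.map_congr_left fun b hb => by
    rw [multiples, multiples, Function.update_of_ne ((hl.mem_erase_iff).1 hb).1]

end AtomMultiplicity

section Lattice

variable (hL : A.LatticeOrdered)
include hL

lemma exists_join (x y : E) :
    ∃ j, A.le x j ∧ A.le y j ∧ ∀ z, A.le x z → A.le y z → A.le j z := by
  obtain ⟨j, -, hub, hle⟩ := (hL x y).2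
  refine ⟨j, hub _ (Set.mem_insert _ _), hub _ (Set.mem_insert_of_mem _ rfl),
    fun z hxz hyz => hle z trivial ?_⟩
  rintro w (rfl | rfl) <;> assumption

lemma oplus_le_of_disjoint {x y z : E} (hd : A.D x y) (hxy : A.Disjoint x y)
    (hxz : A.le x z) (hyz : A.le y z) : A.le (A.oplus x y) z := by
  -- write `x ⊕ y = (x ∨ y) ⊕ e`; cancellation gives `e ≤ x` and `e ≤ y`
  obtain ⟨j, hxj, hyj, hj⟩ := exists_join hL x y
  obtain ⟨e, hje, he⟩ := hj _ (le_oplus_left hd) (le_oplus_right hd)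
  have hex : A.le e x := by
    refine cancel_le_left (D_mono hje hyj (le_refl e)) (A.D_comm _ _ hd) ?_
    rw [← A.oplus_comm x y hd, ← he]
    exact oplus_le_oplus hyj (le_refl e) hje
  have hey : A.le e y := by
    refine cancel_le_left (D_mono hje hxj (le_refl e)) hd ?_
    rw [← he]
    exact oplus_le_oplus hxj (le_refl e) hje
  rw [← he, hxy e hex hey, oplus_zero]
  exact hj z hxz hyz

lemma disjoint_nsmul {a : E} (ha : A.Atom a) {n : ℕ} (hn : A.nTimesDef n a) {z : E}
    (hz : A.D z (A.nsmul n a)) (haz : ¬ A.le a z) : A.Disjoint (A.nsmul n a) z := by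
  induction n generalizing z with
  | zero => exact disjoint_zero_left z
  | succ n ih =>
    obtain ⟨hn, han⟩ := nTimesDef_succ_iff.1 hn
    intro m hm hmz
    have hle : A.le (A.nsmul n a) (A.nsmul (n + 1) a) := le_oplus_right han
    have hmn : A.D m (A.nsmul n a) := D_mono hz hmz hle
    have hdisj := ih hn hmn fun ham => haz (le_trans ham hmz)
    -- `m ⊕ n • a = m ∨ n • a ≤ (n + 1) • a = a ⊕ n • a`
    have hma : A.le m a := cancel_le_right hmn han (oplus_le_of_disjoint hL hmn hdisj.symm hm hle)
    exact (ha.2 m hma).resolve_right fun h => haz (h ▸ hmz)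

lemma sharp_nsmul_ord {a : E} (ha : A.Atom a) (hord : ∃ n, ¬ A.nTimesDef n a) :
    A.Sharp (A.nsmul (A.ord a) a) := by
  refine sharp_of_disjoint_compl (disjoint_nsmul hL ha (nTimesDef_ord hord) (compl_D _) ?_)
  exact fun h => not_nTimesDef_ord_succ hord
    (nTimesDef_succ_iff.2 ⟨nTimesDef_ord hord, D_of_le_compl h⟩)

lemma not_le_nsmul_of_ne {a b : E} (ha : A.Atom a) (hb : A.Atom b) (hab : a ≠ b) {n : ℕ}
    (hn : A.nTimesDef n b) (hd : A.D a (A.nsmul n b)) : ¬ A.le a (A.nsmul n b) := by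
  refine fun h => ha.1 (disjoint_nsmul hL hb hn hd ?_ a h (le_refl a))
  exact fun hba => (ha.2 b hba).elim hb.1 (Ne.symm hab)

lemma D_nsmul_of_not_le {a y : E} (ha : A.Atom a) (hay : A.D a y) (hnay : ¬ A.le a y)
    {n : ℕ} (hn : A.nTimesDef n a) : A.D (A.nsmul n a) y := by
  induction n with
  | zero => exact D_zero_left y
  | succ n ih =>
    obtain ⟨hn, han⟩ := nTimesDef_succ_iff.1 hn
    have hny := ih hn
    have hsum : A.le (A.oplus (A.nsmul n a) y) (A.compl a) :=
      oplus_le_of_disjoint hL hny (disjoint_nsmul hL ha hn (A.D_comm _ _ hny) hnay)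
        (le_compl_of_D han) (le_compl_of_D hay)
    exact (A.assoc' _ _ _ hny (A.D_comm _ _ (D_of_le_compl hsum))).2.1

lemma not_le_of_sumDef {a : E} (ha : A.Atom a) {L : List E} {t : E} (ht : A.SumDef L t)
    (hat : A.D a t) (hsummands : ∀ x ∈ L, A.D a x → ¬ A.le a x) : ¬ A.le a t := by
  induction ht with
  | nil => exact fun h => ha.1 (eq_zero_of_le_zero h)
  | @cons x L s hs hxs ih =>
    have hax : A.D a x := D_mono hat (le_refl a) (le_oplus_left hxs)
    have has : A.D a s := D_mono hat (le_refl a) (le_oplus_right hxs)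
    have hnax := hsummands x (List.mem_cons_self ..) hax
    refine fun h => ih has (fun y hy => hsummands y (List.mem_cons_of_mem _ hy)) ?_
    refine cancel_le_left (A.D_comm _ _ hax) hxs ?_
    rw [← A.oplus_comm a x hax]
    exact oplus_le_of_disjoint hL hax (ha.disjoint_of_not_le hnax) h (le_oplus_left hxs)

lemma sumDef_update [DecidableEq E] {k : E → ℕ} (hk : A.IsAtomMultiplicity k) {l : List E}
    (hl : l.Nodup) {a : E} (hal : a ∈ l) {n : ℕ} (hn : A.nTimesDef n a) (hna : k a = 0 → n = 0)
    {s : E} (hs : A.SumDef (l.map (A.multiples k)) s) :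
    ∃ t, A.SumDef (l.map (A.multiples (Function.update k a n))) t := by
  by_cases hka : k a = 0
  · rw [hna hka, ← hka, Function.update_eq_self]
    exact ⟨s, hs⟩
  obtain ⟨ha, hkd⟩ := hk a hka
  obtain ⟨y, hy, hdy, -⟩ := (sumDef_map_iff_of_mem hal _).1 hs
  have hay : A.D a y := D_mono hdy (le_nsmul hka hkd) (le_refl y)
  have hnay : ¬ A.le a y := by
    refine not_le_of_sumDef hL ha hy hay fun x hx hax => ?_
    obtain ⟨b, hb, rfl⟩ := List.mem_map.1 hx
    by_cases hkb : k b = 0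
    · rw [multiples, hkb]
      exact fun h => ha.1 (eq_zero_of_le_zero h)
    · exact not_le_nsmul_of_ne hL ha (hk b hkb).1 ((hl.mem_erase_iff.1 hb).1.symm)
        (hk b hkb).2 hax
  refine ⟨_, (sumDef_map_iff_of_mem hal _).2 ⟨y, ?_, ?_, rfl⟩⟩
  · rwa [map_erase_multiples_update hl]
  · simpa [multiples] using D_nsmul_of_not_le hL ha hay hnay hn

lemma sumDef_raise {k m : E → ℕ} (hk : A.IsAtomMultiplicity k)
    (hm : ∀ b, k b ≠ 0 → A.nTimesDef (m b) b) (hm₀ : ∀ b, k b = 0 → m b = 0)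
    {l : List E} (hl : l.Nodup) {s : E} (hs : A.SumDef (l.map (A.multiples k)) s) :
    ∃ t, A.SumDef (l.map (A.multiples m)) t := by
  classical
  -- the atoms of `r` have been raised to `m`, one at a time
  have hraised : ∀ r : List E, (∀ b ∈ r, b ∈ l) →
      ∃ t, A.SumDef (l.map (A.multiples fun b => if b ∈ r then m b else k b)) t := by
    intro r
    induction r with
    | nil => simpa using ⟨s, hs⟩
    | cons c r ih =>
      intro hr
      obtain ⟨t, ht⟩ := ih fun b hb => hr b (List.mem_cons_of_mem _ hb)
      by_cases hcr : c ∈ r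
      · have hsame : (fun b => if b ∈ c :: r then m b else k b) =
            fun b => if b ∈ r then m b else k b := by
          funext b
          by_cases hbc : b = c <;> simp [hbc, hcr]
        exact hsame ▸ ⟨t, ht⟩
      have hupd : (fun b => if b ∈ c :: r then m b else k b) =
          Function.update (fun b => if b ∈ r then m b else k b) c (m c) := by
        funext b
        by_cases hbc : b = c <;> simp [hbc, hcr]
      rw [hupd]
      refine sumDef_update hL ?_ hl (hr c List.mem_cons_self) ?_ (by simpa [hcr] using hm₀ c) ht
      · intro b hb
        by_cases hbr : b ∈ r
        · have hkb : k b ≠ 0 := fun h => by simp [hbr, hm₀ b h] at hb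
          simpa [hbr] using ⟨(hk b hkb).1, hm b hkb⟩
        · simpa [hbr] using hk b (by simpa [hbr] using hb)
      · by_cases hkc : k c = 0
        · rw [hm₀ c hkc]
          exact nTimesDef_zero c
        · exact hm c hkc
  obtain ⟨t, ht⟩ := hraised l fun _ h => h
  have hall : l.map (A.multiples fun b => if b ∈ l then m b else k b) = l.map (A.multiples m) :=
    List.map_congr_left fun b hb => by simp [multiples, hb]
  exact ⟨t, hall ▸ ht⟩

end Lattice

section Completeness

lemma isArchimedean_of_complete (hC : A.Complete) : A.IsArchimedean := by
  intro x hx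
  by_contra! hdef
  obtain ⟨s, -, hub, hle⟩ := (hC (Set.range fun n => A.nsmul n x)).1
  obtain ⟨r, hxr, rfl⟩ : A.le x s := by simpa [nsmul, oplus_zero] using hub _ ⟨1, rfl⟩
  have hnr : ∀ n, A.le (A.nsmul n x) r := fun n =>
    cancel_le_left (nTimesDef_succ_iff.1 (hdef (n + 1))).2 hxr (hub _ ⟨n + 1, rfl⟩)
  have hsr : A.le (A.oplus x r) r := hle r trivial (by rintro _ ⟨n, rfl⟩; exact hnr n)
  -- `s = x ⊕ r ≤ r`, hence `x ⊕ s ≤ x ⊕ r = s`, which forces `x = 0`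
  exact hx (eq_zero_of_oplus_le (D_mono hxr (le_refl x) hsr) (oplus_le_oplus_right hsr hxr))

lemma sharplyOrthocomplete_of_complete (hC : A.Complete) : A.SharplyOrthocomplete := by
  intro ι x w _ hw hxw
  refine ⟨_, fun l hl => ?_, (hC _).1.choose_spec⟩
  obtain ⟨s, hs⟩ := hw l hl
  obtain ⟨t, ht, -⟩ := sumDef_of_forall₂_le
    (List.forall₂_map_left_iff.2 (List.forall₂_map_right_iff.2
      (List.forall₂_same.2 fun i _ => hxw i))) hs
  exact ⟨t, ht⟩

lemma exists_isInfIn_of_forall_isSupIn (hsup : ∀ T : Set E, ∃ v, A.IsSupIn Set.univ T v)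
    (T : Set E) : ∃ m, A.IsInfIn Set.univ T m := by
  obtain ⟨v, -, hub, hle⟩ := hsup (A.compl '' T)
  refine ⟨A.compl v, trivial, fun t ht => ?_, fun z _ hz => ?_⟩
  · simpa [compl_compl] using compl_antitone (hub _ ⟨t, ht, rfl⟩)
  · have := compl_antitone
      (hle (A.compl z) trivial (by rintro _ ⟨t, ht, rfl⟩; exact compl_antitone (hz t ht)))
    rwa [compl_compl] at this

end Completeness

section AtomicMinorant

variable (A) in
/-- For a maximal such `k`, the orthosum `⊕ₐ k a • a` is the supremum of `T`. -/
def AtomicMinorant (T : Set E) (k : E → ℕ) : Prop :=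
  A.IsAtomMultiplicity k ∧ ∀ l : List E, l.Nodup →
    ∃ s, A.SumDef (l.map (A.multiples k)) s ∧ ∀ u, A.IsUB T u → A.le s u

variable {T : Set E}

lemma atomicMinorant_zero : A.AtomicMinorant T 0 := by
  have hzero : ∀ l : List E, A.SumDef (l.map (A.multiples 0)) A.zero := by
    intro l
    induction l with
    | nil => exact SumDef.nil
    | cons a l ih => simpa [multiples, nsmul, zero_oplus] using SumDef.cons ih (D_zero_left _)
  exact ⟨fun a h => absurd rfl h, fun l _ => ⟨A.zero, hzero l, fun u _ => zero_le u⟩⟩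

lemma exists_atomicMinorant_upper_bound (hArch : A.IsArchimedean) {c : Set (E → ℕ)}
    (hc : c ⊆ {k | A.AtomicMinorant T k}) (hchain : IsChain (· ≤ ·) c) {g₀ : E → ℕ}
    (hg₀ : g₀ ∈ c) : ∃ K ∈ {k | A.AtomicMinorant T k}, ∀ g ∈ c, g ≤ K := by
  classical
  have hbdd : ∀ a, BddAbove ((fun g : E → ℕ => g a) '' c) := by
    refine fun a => ⟨A.ord a, ?_⟩
    rintro _ ⟨g, hg, rfl⟩
    by_cases hga : g a = 0
    · simp [hga]
    · obtain ⟨ha, hgd⟩ := (hc hg).1 a hga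
      exact le_ord (hArch a ha.1) hgd
  set K : E → ℕ := fun a => sSup ((fun g : E → ℕ => g a) '' c)
  have hle : ∀ g ∈ c, g ≤ K := fun g hg a => le_csSup (hbdd a) ⟨g, hg, rfl⟩
  have hattain : ∀ a, ∃ g ∈ c, g a = K a := fun a =>
    Nat.sSup_mem (⟨g₀ a, g₀, hg₀, rfl⟩ : ((fun g : E → ℕ => g a) '' c).Nonempty) (hbdd a)
  choose G hGc hGK using hattain
  have hagree : ∀ l : List E, ∃ g ∈ c, ∀ a ∈ l, g a = K a := by
    intro l
    have : Nonempty c := ⟨⟨g₀, hg₀⟩⟩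
    obtain ⟨g, hg⟩ := hchain.directedOn.directed_val.finset_le
      (l.toFinset.image fun a => (⟨G a, hGc a⟩ : c))
    refine ⟨g, g.2, fun a ha => le_antisymm (hle g g.2 a) ?_⟩
    rw [← hGK a]
    exact hg _ (Finset.mem_image_of_mem _ (List.mem_toFinset.2 ha)) a
  refine ⟨K, ⟨fun a ha => ?_, fun l hl => ?_⟩, hle⟩
  · rw [← hGK a] at ha ⊢
    exact (hc (hGc a)).1 a ha
  · obtain ⟨g, hg, hgK⟩ := hagree l
    obtain ⟨s, hs, hsu⟩ := (hc hg).2 l hl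
    have hmap : l.map (A.multiples g) = l.map (A.multiples K) :=
      List.map_congr_left fun a ha => by rw [multiples, multiples, hgK a ha]
    exact ⟨s, hmap ▸ hs, hsu⟩

lemma atomicMinorant_update_succ [DecidableEq E] {K : E → ℕ} (hK : A.AtomicMinorant T K)
    {b v : E} (hb : A.Atom b) (hv : A.IsUB (A.finiteSums (A.multiples K)) v) (hbv : A.D b v)
    (hub : ∀ u, A.IsUB T u → A.le (A.oplus b v) u) :
    A.AtomicMinorant T (Function.update K b (K b + 1)) := by
  have hKb : A.nTimesDef (K b) b := by
    by_cases h : K b = 0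
    · exact h ▸ nTimesDef_zero b
    · exact (hK.1 b h).2
  have hKbv : A.le (A.nsmul (K b) b) v := by
    simpa [multiples, oplus_zero] using
      hv _ ⟨[b], List.nodup_singleton b, SumDef.cons SumDef.nil (D_zero_right _)⟩
  refine ⟨fun a ha => ?_, fun l hl => ?_⟩
  · by_cases hab : a = b
    · subst hab
      simpa using ⟨hb, nTimesDef_succ_iff.2 ⟨hKb, D_mono hbv (le_refl _) hKbv⟩⟩
    · rw [Function.update_of_ne hab] at ha ⊢
      exact hK.1 a ha
  obtain ⟨s, hs, hsu⟩ := hK.2 l hl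
  by_cases hbl : b ∈ l
  · -- raising `K b` by one turns the sum `s` into `b ⊕ s ≤ b ⊕ v`
    have hsv : A.le s v := hv s ⟨l, hl, hs⟩
    obtain ⟨y, hy, hdy, rfl⟩ := (sumDef_map_iff_of_mem hbl _).1 hs
    obtain ⟨-, hd, he⟩ := A.assoc' b _ y hdy (D_mono hbv (le_refl b) hsv)
    have hKb' : A.multiples (Function.update K b (K b + 1)) b = A.oplus b (A.multiples K b) := by
      simp [multiples, nsmul]
    refine ⟨_, (sumDef_map_iff_of_mem hbl _).2 ⟨y, ?_, ?_, rfl⟩, fun u hu => ?_⟩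
    · rwa [map_erase_multiples_update hl]
    · rwa [hKb']
    · rw [hKb', he]
      exact le_trans (oplus_le_oplus_right hsv hbv) (hub u hu)
  · have hmap : l.map (A.multiples (Function.update K b (K b + 1))) = l.map (A.multiples K) :=
      List.map_congr_left fun a ha => by
        rw [multiples, multiples, Function.update_of_ne (ne_of_mem_of_not_mem ha hbl)]
    exact ⟨s, hmap ▸ hs, hsu⟩

lemma isUB_of_maximal_atomicMinorant (hL : A.LatticeOrdered) (hAtomic : A.Atomic) {K : E → ℕ}
    (hK : Maximal (A.AtomicMinorant T) K) {v : E} (hv : A.IsUB (A.finiteSums (A.multiples K)) v)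
    (hvle : ∀ u, A.IsUB T u → A.le v u) : A.IsUB T v := by
  classical
  intro t ht
  by_contra htv
  obtain ⟨j, htj, ⟨d, hvd, rfl⟩, hj⟩ := exists_join hL t v
  have hd : d ≠ A.zero := by
    rintro rfl
    exact htv (by rwa [oplus_zero] at htj)
  obtain ⟨b, hb, hbd⟩ := hAtomic d hd
  have hub : ∀ u, A.IsUB T u → A.le (A.oplus b v) u := fun u hu => by
    refine le_trans (oplus_le_oplus hbd (le_refl v) (A.D_comm _ _ hvd)) ?_
    rw [← A.oplus_comm v d hvd]
    exact hj u (hu t ht) (hvle u hu)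
  have hupd := atomicMinorant_update_succ hK.1 hb hv (D_mono (A.D_comm _ _ hvd) hbd (le_refl v)) hub
  have := hK.2 hupd fun a => by by_cases hab : a = b <;> simp [hab]
  simpa using this b

end AtomicMinorant

lemma exists_isSupIn_of_sharplyOrthocomplete (hL : A.LatticeOrdered) (hAtomic : A.Atomic)
    (hArch : A.IsArchimedean) (hSO : A.SharplyOrthocomplete) (T : Set E) :
    ∃ v, A.IsSupIn Set.univ T v := by
  classical
  obtain ⟨K, -, hK⟩ := zorn_le_nonempty₀ {k | A.AtomicMinorant T k}
    (fun c hc hchain g hg => exists_atomicMinorant_upper_bound hArch hc hchain hg) 0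
    atomicMinorant_zero
  obtain ⟨hKatom, hKsum⟩ := hK.1
  have hord : ∀ a, K a ≠ 0 → ∃ n, ¬ A.nTimesDef n a := fun a h => hArch a (hKatom a h).1.1
  -- each `K a • a` lies below the sharp element `ord a • a`
  set M : E → ℕ := fun a => if K a = 0 then 0 else A.ord a
  have hsharp : ∀ a, A.Sharp (A.multiples M a) := fun a => by
    by_cases h : K a = 0
    · simpa [M, multiples, h, nsmul] using sharp_of_disjoint_compl (disjoint_zero_left _)
    · simpa [M, multiples, h] using sharp_nsmul_ord hL (hKatom a h).1 (hord a h)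
  have horth : A.Orthogonal (A.multiples M) := fun l hl => by
    obtain ⟨s, hs, -⟩ := hKsum l hl
    exact sumDef_raise hL hKatom (fun a h => by simpa [M, h] using nTimesDef_ord (hord a h))
      (fun a h => by simp [M, h]) hl hs
  have hKM : ∀ a, A.le (A.multiples K a) (A.multiples M a) := fun a => by
    by_cases h : K a = 0
    · simp only [M, multiples, h, if_true]
      exact le_refl _
    · simpa [M, multiples, h] using
        nsmul_le_nsmul (le_ord (hord a h) (hKatom a h).2) (nTimesDef_ord (hord a h))
  obtain ⟨v, -, -, hv, hvle⟩ := hSO E (A.multiples K) (A.multiples M) hsharp horth hKM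
  have hvle' : ∀ u, A.IsUB T u → A.le v u := fun u hu => hvle u trivial fun s ⟨l, hl, hs⟩ => by
    obtain ⟨s', hs', hs'u⟩ := hKsum l hl
    exact sumDef_unique hs hs' ▸ hs'u u hu
  exact ⟨v, trivial, isUB_of_maximal_atomicMinorant hL hAtomic hK hv hvle', fun u _ => hvle' u⟩

end EffectAlgebra

/-- An atomic lattice effect algebra is a complete lattice iff it is Archimedean
and sharply orthocomplete. -/
theorem stmt19 {E : Type u} (A : EffectAlgebra E) (hL : A.LatticeOrdered)
    (hAtomic : A.Atomic) :
    A.Complete ↔ (A.IsArchimedean ∧ A.SharplyOrthocomplete) := by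
  refine ⟨fun hC => ⟨A.isArchimedean_of_complete hC, A.sharplyOrthocomplete_of_complete hC⟩,
    fun ⟨hArch, hSO⟩ => ?_⟩
  have hsup := A.exists_isSupIn_of_sharplyOrthocomplete hL hAtomic hArch hSO
  exact fun S => ⟨hsup S, A.exists_isInfIn_of_forall_isSupIn hsup S⟩
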